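/- arXiv:0806.3301 — 3 statements merged into one kernel-verified Lean document; each statement's English description precedes it below -/
import Mathlib

section
/- Let x₁, …, xₙ be real numbers with n odd, let μ = (1/n)·Σᵢ xᵢ be their mean, σ = √((1/n)·Σᵢ (xᵢ − μ)²) their standard deviation, and let m be their median, i.e., the k-th smallest value with k = (n+1)/2. Then μ − σ ≤ m ≤ μ + σ. -/
/-!
A median `m` minimises `c ↦ ∑ i, |xᵢ - c|`: moving `c` away from `m` increases the distance to
at least half of the points and decreases it for at most half of them, by the same amount. In
particular `∑ i, |xᵢ - m| ≤ ∑ i, |xᵢ - μ|`, and therefore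
`n |μ - m| = |∑ i, (xᵢ - m)| ≤ ∑ i, |xᵢ - μ| ≤ √(n ∑ i, (xᵢ - μ)²)` by Cauchy–Schwarz,
which is `|μ - m| ≤ σ`.
-/

open Finset

section Median

variable {ι α : Type*} [LinearOrder α]

def IsMedian (s : Finset ι) (x : ι → α) (m : α) : Prop :=
  #{i ∈ s | x i < m} ≤ #{i ∈ s | m ≤ x i} ∧ #{i ∈ s | m < x i} ≤ #{i ∈ s | x i ≤ m}

theorem Monotone.isMedian_apply_half {n : ℕ} {y : Fin n → α} (hy : Monotone y) (hn : 0 < n) :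
    IsMedian univ y (y ⟨n / 2, Nat.div_lt_self hn one_lt_two⟩) := by
  set j : Fin n := ⟨n / 2, Nat.div_lt_self hn one_lt_two⟩
  constructor
  · calc #{i | y i < y j}
        ≤ #(Iio j) := card_le_card fun i hi => mem_Iio.2 (hy.reflect_lt (mem_filter.1 hi).2)
      _ ≤ #(Ici j) := by simp only [Fin.card_Iio, Fin.card_Ici, j]; omega
      _ ≤ #{i | y j ≤ y i} :=
        card_le_card fun i hi => mem_filter.2 ⟨mem_univ i, hy (mem_Ici.1 hi)⟩
  · calc #{i | y j < y i}
        ≤ #(Ioi j) := card_le_card fun i hi => mem_Ioi.2 (hy.reflect_lt (mem_filter.1 hi).2)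
      _ ≤ #(Iic j) := by simp only [Fin.card_Ioi, Fin.card_Iic, j]; omega
      _ ≤ #{i | y i ≤ y j} :=
        card_le_card fun i hi => mem_filter.2 ⟨mem_univ i, hy (mem_Iic.1 hi)⟩

variable [AddCommGroup α] [IsOrderedAddMonoid α]

theorem sum_abs_sub_le_sum_abs_sub_of_le {s : Finset ι} {x : ι → α} {m c : α}
    (hm : #{i ∈ s | m < x i} ≤ #{i ∈ s | x i ≤ m}) (hmc : m ≤ c) :
    ∑ i ∈ s, |x i - m| ≤ ∑ i ∈ s, |x i - c| := by
  set low := s.filter (fun i => x i ≤ m)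
  set high := s.filter (fun i => ¬x i ≤ m)
  have hlow : ∑ i ∈ low, |x i - m| = ∑ i ∈ low, |x i - c| - #low • (c - m) := by
    rw [← sum_const, ← sum_sub_distrib]
    refine sum_congr rfl fun i hi => ?_
    have hxm : x i ≤ m := (mem_filter.1 hi).2
    rw [abs_of_nonpos (sub_nonpos.2 hxm), abs_of_nonpos (sub_nonpos.2 (hxm.trans hmc))]
    abel
  have hhigh : ∑ i ∈ high, |x i - m| ≤ ∑ i ∈ high, |x i - c| + #high • (c - m) := by
    rw [← sum_const, ← sum_add_distrib]
    refine sum_le_sum fun i _ => ?_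
    simpa only [abs_of_nonneg (sub_nonneg.2 hmc)] using abs_sub_le (x i) c m
  have hcard : #high • (c - m) ≤ #low • (c - m) := by
    refine nsmul_le_nsmul_left (sub_nonneg.2 hmc) ?_
    simpa only [high, not_le] using hm
  rw [← sum_filter_add_sum_filter_not s (fun i => x i ≤ m),
    ← sum_filter_add_sum_filter_not s (fun i => x i ≤ m) (fun i => |x i - c|)]
  calc ∑ i ∈ low, |x i - m| + ∑ i ∈ high, |x i - m|
      ≤ (∑ i ∈ low, |x i - c| - #low • (c - m)) + (∑ i ∈ high, |x i - c| + #high • (c - m)) :=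
        add_le_add hlow.le hhigh
    _ = ∑ i ∈ low, |x i - c| + ∑ i ∈ high, |x i - c| - (#low • (c - m) - #high • (c - m)) := by
        abel
    _ ≤ ∑ i ∈ low, |x i - c| + ∑ i ∈ high, |x i - c| := sub_le_self _ (sub_nonneg.2 hcard)

theorem IsMedian.sum_abs_sub_le {s : Finset ι} {x : ι → α} {m : α} (h : IsMedian s x m)
    (c : α) : ∑ i ∈ s, |x i - m| ≤ ∑ i ∈ s, |x i - c| := by
  rcases le_total m c with hmc | hcm
  · exact sum_abs_sub_le_sum_abs_sub_of_le h.2 hmc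
  · have := sum_abs_sub_le_sum_abs_sub_of_le (x := fun i => -x i) (m := -m) (c := -c)
      (by simpa only [neg_lt_neg_iff, neg_le_neg_iff] using h.1) (neg_le_neg hcm)
    simpa only [neg_sub_neg, abs_sub_comm] using this

end Median

theorem List.mergeSort_ofFn_eq_ofFn_comp_sort {α : Type*} [LinearOrder α] {n : ℕ}
    (x : Fin n → α) : (List.ofFn x).mergeSort (· ≤ ·) = List.ofFn (x ∘ Tuple.sort x) :=
  List.Perm.eq_of_sortedLE List.sortedLE_mergeSort
    (List.sortedLE_ofFn_iff.2 (Tuple.monotone_sort x))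
    ((List.mergeSort_perm _ _).trans ((Tuple.sort x).ofFn_comp_perm x).symm)

theorem abs_sub_le_sqrt_of_sum_abs_sub_le {ι : Type*} {s : Finset ι} (hs : s.Nonempty)
    {x : ι → ℝ} {μ c : ℝ} (hμ : μ = (∑ i ∈ s, x i) / #s)
    (hc : ∑ i ∈ s, |x i - c| ≤ ∑ i ∈ s, |x i - μ|) :
    |μ - c| ≤ √((∑ i ∈ s, (x i - μ) ^ 2) / #s) := by
  have hcard : (0 : ℝ) < #s := by exact_mod_cast hs.card_pos
  have hsum : ∑ i ∈ s, (x i - c) = #s * (μ - c) := by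
    rw [sum_sub_distrib, sum_const, nsmul_eq_mul, hμ]
    field_simp
  have hmean : #s * |μ - c| ≤ ∑ i ∈ s, |x i - μ| :=
    calc #s * |μ - c| = |∑ i ∈ s, (x i - c)| := by rw [hsum, abs_mul, abs_of_pos hcard]
      _ ≤ ∑ i ∈ s, |x i - c| := abs_sum_le_sum_abs _ _
      _ ≤ ∑ i ∈ s, |x i - μ| := hc
  have hcs : (∑ i ∈ s, |x i - μ|) ^ 2 ≤ #s * ∑ i ∈ s, (x i - μ) ^ 2 := by
    simpa only [sq_abs] using sq_sum_le_card_mul_sum_sq (s := s) (f := fun i => |x i - μ|)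
  rw [Real.le_sqrt (abs_nonneg _) (by positivity), le_div_iff₀ hcard]
  nlinarith [pow_le_pow_left₀ (by positivity) hmean 2]

theorem empirical_median_within_one_sd_of_mean_general
    (n : ℕ) (x : Fin n → ℝ)
    (μ σ m : ℝ)
    (hμ : μ = (∑ i, x i) / n)
    (hσ : σ = Real.sqrt ((∑ i, (x i - μ) ^ 2) / n))
    (hm : m = ((List.ofFn x).mergeSort (· ≤ ·))[n / 2]!) :
    μ - σ ≤ m ∧ m ≤ μ + σ := by
  rcases n.eq_zero_or_pos with rfl | hn
  -- without data `μ`, `σ` and `m` all take the junk value `0`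
  · simp_all [show (default : ℝ) = 0 from rfl]
  have hhalf : n / 2 < n := Nat.div_lt_self hn one_lt_two
  have hmy : m = (x ∘ Tuple.sort x) ⟨n / 2, hhalf⟩ := by
    simp [hm, List.mergeSort_ofFn_eq_ofFn_comp_sort, hhalf]
  have hdev : ∑ i, |x i - m| ≤ ∑ i, |x i - μ| := by
    rw [← Equiv.sum_comp (Tuple.sort x) (fun i => |x i - m|),
      ← Equiv.sum_comp (Tuple.sort x) (fun i => |x i - μ|), hmy]
    exact ((Tuple.monotone_sort x).isMedian_apply_half hn).sum_abs_sub_le μ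
  have hclose := abs_sub_le_sqrt_of_sum_abs_sub_le (univ_nonempty_iff.2 ⟨⟨0, hn⟩⟩)
    (by simpa using hμ) hdev
  simp only [card_univ, Fintype.card_fin, ← hσ] at hclose
  constructor <;> linarith [abs_le.1 hclose]

/-- For an odd number of data points, the empirical median (the `(n+1)/2`-th
smallest value, i.e. the entry at 0-based index `n / 2` of the sorted list)
lies within one (empirical) standard deviation of the empirical mean. -/
theorem empirical_median_within_one_sd_of_mean
    (n : ℕ) (hn : Odd n) (x : Fin n → ℝ)
    (μ σ m : ℝ)
    (hμ : μ = (∑ i, x i) / n)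
    (hσ : σ = Real.sqrt ((∑ i, (x i - μ) ^ 2) / n))
    (hm : m = ((List.ofFn x).mergeSort (· ≤ ·))[n / 2]!) :
    μ - σ ≤ m ∧ m ≤ μ + σ :=
  empirical_median_within_one_sd_of_mean_general n x μ σ m hμ hσ hm
end

section
/- Let X₁, X₂, … be i.i.d. real-valued random variables with E[X₁⁴] < ∞, variance σ², and for each n ≥ 2 let σ̂ₙ = √((1/n)·Σᵢ₌₁ⁿ (Xᵢ − X̄ₙ)²) be the empirical standard deviation, where X̄ₙ is the sample mean. Then for every ε > 0, P(σ̂ₙ − σ > ε) = O(n⁻¹): there exists a constant C (depending on ε and the distribution of X₁) such that P(σ̂ₙ − σ > ε) ≤ C/n for all n ≥ 2. -/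
/-!
The empirical variance is the sample mean of the `Xᵢ²` minus the square of the sample mean `M`
of the `Xᵢ`, while `σ² = E[X²] - E[X]²`. If `σ̂ₙ > σ + ε` then `σ̂ₙ² - σ² > ε²`, so either the
sample mean of the squares exceeds `E[X²]` by `ε²/2`, or `E[X]² - M² > ε²/2`; since
`E[X]² - M² ≤ 2|E[X]| |M - E[X]|`, the latter forces `|M - E[X]| ≥ ε²/2 / (2|E[X]| + 1)`.
Chebyshev's inequality bounds each event by `Var / (c² n)`; `E[X⁴] < ∞` makes `Var(X²)` finite.
-/

open MeasureTheory ProbabilityTheory Finset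

lemma MeasureTheory.MemLp.sq {Ω : Type*} [MeasurableSpace Ω] {P : Measure Ω} {f : Ω → ℝ}
    {p : ENNReal} (hf : MemLp f (2 * p) P) : MemLp (fun ω => f ω ^ 2) p P := by
  convert hf.norm_rpow_div 2 using 1
  · simp
  · rw [mul_comm, ENNReal.mul_div_cancel_right two_ne_zero ENNReal.ofNat_ne_top]

lemma Finset.sum_sub_mean_sq_div_card {ι : Type*} (s : Finset ι) (x : ι → ℝ) :
    (∑ i ∈ s, (x i - (∑ j ∈ s, x j) / #s) ^ 2) / #s
      = (∑ i ∈ s, x i ^ 2) / #s - ((∑ j ∈ s, x j) / #s) ^ 2 := by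
  rcases s.eq_empty_or_nonempty with rfl | hs
  · simp
  have hcard : (#s : ℝ) ≠ 0 := by exact_mod_cast hs.card_pos.ne'
  simp only [sub_sq, sum_add_distrib, sum_sub_distrib, ← sum_mul, ← mul_sum, sum_const,
    nsmul_eq_mul]
  field_simp
  ring

namespace ProbabilityTheory

variable {Ω ι : Type*} [MeasurableSpace Ω] {P : Measure Ω} [IsFiniteMeasure P]
  {Y : ι → Ω → ℝ} {Z : Ω → ℝ}

lemma meas_ge_abs_sum_div_card_sub_le (hZ : MemLp Z 2 P) (hident : ∀ i, IdentDistrib (Y i) Z P P)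
    (hindep : Pairwise fun i j => IndepFun (Y i) (Y j) P) {s : Finset ι} (hs : s.Nonempty)
    {c : ℝ} (hc : 0 < c) :
    P {ω | c ≤ |(∑ i ∈ s, Y i ω) / #s - P[Z]|} ≤ ENNReal.ofReal (Var[Z; P] / c ^ 2 / #s) := by
  have hcard : (0 : ℝ) < #s := by exact_mod_cast hs.card_pos
  have hY : ∀ i, MemLp (Y i) 2 P := fun i => (hident i).symm.memLp_snd hZ
  have hmean : P[∑ i ∈ s, Y i] = (#s : ℝ) * P[Z] := by
    simp only [Finset.sum_apply]
    rw [integral_finsetSum s fun i _ => (hY i).integrable one_le_two,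
      sum_congr rfl fun i _ => (hident i).integral_eq, sum_const, nsmul_eq_mul]
  have hvar : Var[∑ i ∈ s, Y i; P] = (#s : ℝ) * Var[Z; P] := by
    rw [IndepFun.variance_sum (fun i _ => hY i) fun i _ j _ hij => hindep hij,
      sum_congr rfl fun i _ => (hident i).variance_eq, sum_const, nsmul_eq_mul]
  have hset : {ω | c ≤ |(∑ i ∈ s, Y i ω) / #s - P[Z]|}
      = {ω | #s * c ≤ |(∑ i ∈ s, Y i) ω - P[∑ i ∈ s, Y i]|} := by
    ext ω
    rw [Set.mem_ofPred_eq, Set.mem_ofPred_eq, hmean, Finset.sum_apply, div_sub' hcard.ne', abs_div,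
      abs_of_pos hcard, le_div_iff₀ hcard, mul_comm]
  calc P {ω | c ≤ |(∑ i ∈ s, Y i ω) / #s - P[Z]|}
      ≤ ENNReal.ofReal (Var[∑ i ∈ s, Y i; P] / (#s * c) ^ 2) := by
        rw [hset]
        exact meas_ge_le_variance_div_sq (memLp_finsetSum' s fun i _ => hY i) (by positivity)
    _ = ENNReal.ofReal (Var[Z; P] / c ^ 2 / #s) := by
        rw [hvar]
        congr 1
        field_simp

end ProbabilityTheory

lemma sq_sub_sq_le_two_mul_abs_mul_abs_sub (μ M : ℝ) : μ ^ 2 - M ^ 2 ≤ 2 * |μ| * |M - μ| := by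
  calc μ ^ 2 - M ^ 2 ≤ 2 * μ * (μ - M) := by nlinarith [sq_nonneg (μ - M)]
    _ ≤ |2 * μ * (μ - M)| := le_abs_self _
    _ = 2 * |μ| * |M - μ| := by rw [abs_mul, abs_mul, abs_two, abs_sub_comm]

lemma le_sub_or_le_abs_sub_of_add_lt_sqrt {σ ε μ m a M : ℝ} (hσ : 0 ≤ σ) (hε : 0 ≤ ε)
    (hσsq : σ ^ 2 = m - μ ^ 2) (h : σ + ε < √(a - M ^ 2)) :
    ε ^ 2 / 2 ≤ a - m ∨ ε ^ 2 / 2 / (2 * |μ| + 1) ≤ |M - μ| := by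
  have hsq : (σ + ε) ^ 2 < a - M ^ 2 := (Real.lt_sqrt (by positivity)).1 h
  by_contra! ⟨ha, hM⟩
  rw [lt_div_iff₀ (by positivity)] at hM
  nlinarith [sq_sub_sq_le_two_mul_abs_mul_abs_sub μ M, abs_nonneg (M - μ), mul_nonneg hσ hε]

lemma Finset.le_abs_sub_or_le_abs_sub_of_add_lt_sqrt_sum_sub_mean_sq {ι : Type*} (s : Finset ι)
    (x : ι → ℝ) {σ ε μ m : ℝ} (hσ : 0 ≤ σ) (hε : 0 ≤ ε) (hσsq : σ ^ 2 = m - μ ^ 2)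
    (h : σ + ε < √((∑ i ∈ s, (x i - (∑ j ∈ s, x j) / #s) ^ 2) / #s)) :
    ε ^ 2 / 2 ≤ |(∑ i ∈ s, x i ^ 2) / #s - m|
      ∨ ε ^ 2 / 2 / (2 * |μ| + 1) ≤ |(∑ i ∈ s, x i) / #s - μ| := by
  rw [sum_sub_mean_sq_div_card] at h
  exact (le_sub_or_le_abs_sub_of_add_lt_sqrt hσ hε hσsq h).imp (·.trans (le_abs_self _)) id

/-- For i.i.d. random variables with a finite fourth moment, the probability
that the empirical standard deviation exceeds the true standard deviation by
more than `ε` is `O(1/n)`: there is a constant `C` (depending on `ε` and the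
distribution) such that `P(σ̂ₙ − σ > ε) ≤ C / n` for all `n ≥ 2`. -/
theorem prob_empirical_sd_exceeds_isBigO_inv
    {Ω : Type*} [MeasurableSpace Ω] (P : Measure Ω) [IsProbabilityMeasure P]
    (X : ℕ → Ω → ℝ)
    (hmeas : ∀ i, Measurable (X i))
    (hindep : iIndepFun X P)
    (hident : ∀ i, Measure.map (X i) P = Measure.map (X 0) P)
    (hL4 : MeasureTheory.MemLp (X 0) 4 P)
    (σ : ℝ) (hσ : σ = Real.sqrt (variance (X 0) P)) :
    ∀ ε > (0 : ℝ), ∃ C : ℝ, ∀ n ≥ 2,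
      P {ω | Real.sqrt ((∑ i ∈ range n,
            (X i ω - (∑ j ∈ range n, X j ω) / n) ^ 2) / n) - σ > ε}
        ≤ ENNReal.ofReal (C / n) := by
  intro ε hε
  have hX : ∀ i, IdentDistrib (X i) (X 0) P P := fun i =>
    ⟨(hmeas i).aemeasurable, (hmeas 0).aemeasurable, hident i⟩
  have hXsq : ∀ i, IdentDistrib (fun ω => X i ω ^ 2) (fun ω => X 0 ω ^ 2) P P := fun i =>
    (hX i).comp (measurable_id.pow_const 2)
  have hσsq : σ ^ 2 = P[fun ω => X 0 ω ^ 2] - P[X 0] ^ 2 := by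
    rw [hσ, Real.sq_sqrt (variance_nonneg _ _),
      variance_eq_sub (hL4.mono_exponent (by norm_num))]
    rfl
  set δ := ε ^ 2 / 2
  set η := δ / (2 * |P[X 0]| + 1)
  refine ⟨Var[fun ω => X 0 ω ^ 2; P] / δ ^ 2 + Var[X 0; P] / η ^ 2, fun n hn => ?_⟩
  have hs : (range n).Nonempty := nonempty_range_iff.2 (by omega)
  have hnonneg : ∀ Y : Ω → ℝ, ∀ c : ℝ, 0 ≤ Var[Y; P] / c ^ 2 / n := fun Y c => by
    have := variance_nonneg Y P
    positivity
  calc P {ω | Real.sqrt ((∑ i ∈ range n,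
            (X i ω - (∑ j ∈ range n, X j ω) / n) ^ 2) / n) - σ > ε}
      ≤ P ({ω | δ ≤ |(∑ i ∈ range n, X i ω ^ 2) / n - P[fun ω => X 0 ω ^ 2]|}
          ∪ {ω | η ≤ |(∑ i ∈ range n, X i ω) / n - P[X 0]|}) := by
        refine measure_mono fun ω (hω : ε < _ - σ) => ?_
        have hdev := le_abs_sub_or_le_abs_sub_of_add_lt_sqrt_sum_sub_mean_sq (range n) (X · ω)
          (hσ ▸ Real.sqrt_nonneg _) hε.le hσsq
        simp only [card_range] at hdev
        exact hdev (by linarith)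
    _ ≤ _ := measure_union_le _ _
    _ ≤ ENNReal.ofReal (Var[fun ω => X 0 ω ^ 2; P] / δ ^ 2 / n)
          + ENNReal.ofReal (Var[X 0; P] / η ^ 2 / n) := by
        gcongr
        · simpa only [card_range] using meas_ge_abs_sum_div_card_sub_le
            (MemLp.sq (by norm_num [hL4])) hXsq
            (fun i j hij => (hindep.indepFun hij).comp (measurable_id.pow_const 2)
              (measurable_id.pow_const 2)) hs (by positivity)
        · simpa only [card_range] using
            meas_ge_abs_sum_div_card_sub_le (hL4.mono_exponent (by norm_num)) hX
              (fun i j hij => hindep.indepFun hij) hs (by positivity)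
    _ = ENNReal.ofReal ((Var[fun ω => X 0 ω ^ 2; P] / δ ^ 2 + Var[X 0; P] / η ^ 2) / n) := by
        rw [← ENNReal.ofReal_add (hnonneg _ _) (hnonneg _ _), add_div]
end

section
/- Let x₁, …, xₙ be real numbers with n odd, mean μ = (1/n)·Σᵢ xᵢ, standard deviation σ = √((1/n)·Σᵢ (xᵢ − μ)²) with σ > 0, and median m (the k-th smallest value with k = (n+1)/2). For any integer B ≥ 1, partition [μ − σ, μ + σ] into the B equally spaced bins [μ − σ + (2σ/B)·i, μ − σ + (2σ/B)·(i+1)) for i = 0, …, B − 1. Then there exists i ∈ {0, …, B − 1} such that the distance from m to the midpoint of the i-th bin is at most σ/B, i.e., |m − (μ − σ + (2i+1)·σ/B)| ≤ σ/B. -/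
/-!
The upper median `m` minimises `c ↦ ∑ |xᵢ - c|`: pairing the `j`-th smallest value with the
`j`-th largest, `m` lies between the two, so each pair contributes their distance to the sum
at `c = m` and at least that much at any other `c`. Consequently
`|μ - m| ≤ (1/n) ∑ |xᵢ - m| ≤ (1/n) ∑ |xᵢ - μ| ≤ σ`, the last step by Cauchy–Schwarz, so `m`
lies in `[μ - σ, μ + σ]` and hence in one of the `B` bins, each of half-width `σ / B`.
-/

open Finset

theorem abs_sub_add_abs_sub_le_of_le_of_le {a b m : ℝ} (ham : a ≤ m) (hmb : m ≤ b) (c : ℝ) :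
    |a - m| + |b - m| ≤ |a - c| + |b - c| := by
  rw [abs_of_nonpos (sub_nonpos.2 ham), abs_of_nonneg (sub_nonneg.2 hmb)]
  linarith [neg_abs_le (a - c), le_abs_self (b - c)]

theorem Monotone.sum_abs_sub_le_sum_abs_sub {n : ℕ} {y : Fin n → ℝ} (hy : Monotone y)
    {k : Fin n} (hk₁ : n ≤ 2 * k + 1) (hk₂ : 2 * k ≤ n) (c : ℝ) :
    ∑ j, |y j - y k| ≤ ∑ j, |y j - c| := by
  have hpair (j : Fin n) : |y j - y k| + |y j.rev - y k| ≤ |y j - c| + |y j.rev - c| := by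
    have hj := Fin.val_rev j
    rcases le_total j j.rev with hle | hle
    · exact abs_sub_add_abs_sub_le_of_le_of_le (hy (Fin.mk_le_mk.2 (by omega)))
        (hy (Fin.mk_le_mk.2 (by omega))) c
    · rw [add_comm, add_comm |y j - c|]
      exact abs_sub_add_abs_sub_le_of_le_of_le (hy (Fin.mk_le_mk.2 (by omega)))
        (hy (Fin.mk_le_mk.2 (by omega))) c
  have hsum := sum_le_sum fun j (_ : j ∈ univ) => hpair j
  have hrev (f : Fin n → ℝ) : ∑ j, f (Fin.rev j) = ∑ j, f j := Equiv.sum_comp Fin.revPerm f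
  rw [sum_add_distrib, sum_add_distrib, hrev fun j => |y j - y k|,
    hrev fun j => |y j - c|] at hsum
  linarith

theorem sum_abs_sub_mergeSort_half_le {n : ℕ} (hn : 0 < n) (x : Fin n → ℝ) (c : ℝ) :
    ∑ i, |x i - ((List.ofFn x).mergeSort (· ≤ ·))[n / 2]!| ≤ ∑ i, |x i - c| := by
  have hk : n / 2 < n := Nat.div_lt_self hn one_lt_two
  rw [List.mergeSort_ofFn_eq_ofFn_comp_sort, getElem!_pos _ _ (by simpa using hk),
    List.getElem_ofFn]
  have hsorted := (Tuple.monotone_sort x).sum_abs_sub_le_sum_abs_sub (k := ⟨n / 2, hk⟩)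
    (by simp only; omega) (by simp only; omega) c
  simp only [Function.comp_apply] at hsorted ⊢
  rwa [Equiv.sum_comp (Tuple.sort x) fun i => |x i - _|,
    Equiv.sum_comp (Tuple.sort x) fun i => |x i - c|] at hsorted

section Mean

variable {ι : Type*} [Fintype ι] [Nonempty ι]

theorem abs_mean_sub_le_mean_abs_sub (x : ι → ℝ) (c : ℝ) :
    |(∑ i, x i) / Fintype.card ι - c| ≤ (∑ i, |x i - c|) / Fintype.card ι := by
  have hcard : (0 : ℝ) < Fintype.card ι := by exact_mod_cast Fintype.card_pos
  have hmean : (∑ i, x i) / Fintype.card ι - c = (∑ i, (x i - c)) / Fintype.card ι := by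
    rw [sum_sub_distrib, sum_const, card_univ, nsmul_eq_mul]
    field_simp
  rw [hmean, abs_div, abs_of_pos hcard]
  exact div_le_div_of_nonneg_right (abs_sum_le_sum_abs _ _) hcard.le

theorem mean_abs_le_sqrt_mean_sq (a : ι → ℝ) :
    (∑ i, |a i|) / Fintype.card ι ≤ √((∑ i, a i ^ 2) / Fintype.card ι) := by
  have hcard : (0 : ℝ) < Fintype.card ι := by exact_mod_cast Fintype.card_pos
  apply Real.le_sqrt_of_sq_le
  have hcs := sq_sum_le_card_mul_sum_sq (s := univ) (f := fun i => |a i|)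
  simp only [sq_abs, card_univ] at hcs
  rw [div_pow, div_le_div_iff₀ (by positivity) hcard]
  nlinarith

theorem abs_sub_mean_le_sqrt_of_sum_abs_sub_le (x : ι → ℝ) {m : ℝ}
    (hm : ∑ i, |x i - m| ≤ ∑ i, |x i - (∑ i, x i) / Fintype.card ι|) :
    |m - (∑ i, x i) / Fintype.card ι| ≤
      √((∑ i, (x i - (∑ i, x i) / Fintype.card ι) ^ 2) / Fintype.card ι) := by
  rw [abs_sub_comm]
  calc _ ≤ (∑ i, |x i - m|) / Fintype.card ι := abs_mean_sub_le_mean_abs_sub x m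
    _ ≤ (∑ i, |x i - (∑ i, x i) / Fintype.card ι|) / Fintype.card ι := by gcongr
    _ ≤ _ := mean_abs_le_sqrt_mean_sq _

end Mean

theorem exists_abs_sub_bin_midpoint_le {a h t : ℝ} {B : ℕ} (hB : 1 ≤ B) (hat : a ≤ t)
    (hta : t ≤ a + 2 * B * h) : ∃ i < B, |t - (a + (2 * i + 1) * h)| ≤ h := by
  induction B, hB using Nat.le_induction with
  | base => refine ⟨0, one_pos, abs_le.2 ⟨?_, ?_⟩⟩ <;> push_cast at hta ⊢ <;> linarith
  | succ B hB ih =>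
    by_cases htB : t ≤ a + 2 * B * h
    · obtain ⟨i, hi, hbin⟩ := ih htB
      exact ⟨i, hi.trans B.lt_succ_self, hbin⟩
    · refine ⟨B, B.lt_succ_self, abs_le.2 ⟨?_, ?_⟩⟩ <;> push_cast at hta <;> linarith

theorem binapprox_accuracy_general
    (n : ℕ) (hn : Odd n) (x : Fin n → ℝ)
    (μ σ m : ℝ)
    (hμ : μ = (∑ i, x i) / n)
    (hσ : σ = Real.sqrt ((∑ i, (x i - μ) ^ 2) / n))
    (hm : m = ((List.ofFn x).mergeSort (· ≤ ·))[n / 2]!)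
    (B : ℕ) (hB : 1 ≤ B) :
    ∃ i : ℕ, i < B ∧
      |m - (μ - σ + (2 * (i : ℝ) + 1) * σ / B)| ≤ σ / B := by
  have : Nonempty (Fin n) := ⟨⟨0, hn.pos⟩⟩
  have hmμ : |m - μ| ≤ σ := by
    subst hσ hμ hm
    simpa using abs_sub_mean_le_sqrt_of_sum_abs_sub_le x
      (by simpa using sum_abs_sub_mergeSort_half_le hn.pos x _)
  obtain ⟨hlo, hhi⟩ := abs_le.1 hmμ
  have hBpos : (0 : ℝ) < B := by exact_mod_cast hB
  obtain ⟨i, hi, hbin⟩ := exists_abs_sub_bin_midpoint_le hB (a := μ - σ) (h := σ / B) (t := m)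
    (by linarith) (by rw [mul_assoc, mul_div_cancel₀ _ hBpos.ne']; linarith)
  exact ⟨i, hi, by rwa [mul_div_assoc]⟩

/-- Accuracy guarantee of the binapprox algorithm: for an odd number of data
points with positive standard deviation, if `[μ − σ, μ + σ]` is partitioned
into `B` equally spaced bins, then the median (the entry at 0-based index
`n / 2` of the sorted list) is within `σ / B` of the midpoint of some bin. -/
theorem binapprox_accuracy
    (n : ℕ) (hn : Odd n) (x : Fin n → ℝ)
    (μ σ m : ℝ)
    (hμ : μ = (∑ i, x i) / n)
    (hσ : σ = Real.sqrt ((∑ i, (x i - μ) ^ 2) / n))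
    (hσpos : 0 < σ)
    (hm : m = ((List.ofFn x).mergeSort (· ≤ ·))[n / 2]!)
    (B : ℕ) (hB : 1 ≤ B) :
    ∃ i : ℕ, i < B ∧
      |m - (μ - σ + (2 * (i : ℝ) + 1) * σ / B)| ≤ σ / B :=
  binapprox_accuracy_general n hn x μ σ m hμ hσ hm B hB
end
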